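/- Let n ≥ k ≥ 2, let 𝔽 be a field and let S_k ⊆ C([n],k). If a (k−1)-subset V of [n] is simplicial in the k-hyperclique complex ⟨S_k⟩, then supp(δ^{k−1}V) is a cocircuit of Sim_k^n(S_k). -/

import Mathlib

/-!
Common definitions for simplicial matroids, following Cordovil–Lemos–Linhares Sales,
"Dirac's theorem on simplicial matroids".

We model `[n] = {1,…,n}` by `Fin n`, and a subset of `[n]` by a `Finset (Fin n)`.
A family `S_k ⊆ C([n],k)` is a `Finset (Finset (Fin n))` (all of whose members
have cardinality `k`, which is imposed by hypotheses in the theorems).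
-/

open Finset

/-- The incidence number `[F' : F]`: if `F = i₁ < i₂ < ⋯ < iₘ` and `F' = F \ {iⱼ}`
then `[F' : F] = (-1)ʲ` (with `j` the 1-based position of the deleted element),
and `[F' : F] = 0` otherwise. -/
def inc {n : ℕ} (F' F : Finset (Fin n)) : ℤ :=
  ∑ i ∈ F, if F' = F.erase i then (-1 : ℤ) ^ (F.filter (fun j => j ≤ i)).card else 0

/-- The family `C([n], m)` of `m`-element subsets of `[n]`, as a type. -/
abbrev Csets (n m : ℕ) := {F : Finset (Fin n) // F.card = m}

/-- `∂_k F`, the boundary of a single `k`-subset `F` of `[n]`,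
as a vector of `𝔽^{C([n],k-1)}`. -/
def bvec (𝔽 : Type*) [Field 𝔽] (n k : ℕ) (F : Finset (Fin n)) : Csets n (k - 1) → 𝔽 :=
  fun F' => ((inc F'.1 F : ℤ) : 𝔽)

/-- Independence in the simplicial matroid `Sim_k^n(S_k)` over `𝔽`:
`X ⊆ S_k` is independent iff the vectors `∂_k F`, `F ∈ X`, are linearly independent. -/
def SimIndep (𝔽 : Type*) [Field 𝔽] (n k : ℕ) (Sk X : Finset (Finset (Fin n))) : Prop :=
  X ⊆ Sk ∧ LinearIndependent 𝔽 (fun F : X => bvec 𝔽 n k F.1)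

/-- A circuit of `Sim_k^n(S_k)`: a minimal dependent subset of the ground set. -/
def SimCircuit (𝔽 : Type*) [Field 𝔽] (n k : ℕ) (Sk C : Finset (Finset (Fin n))) : Prop :=
  C ⊆ Sk ∧ ¬ LinearIndependent 𝔽 (fun F : C => bvec 𝔽 n k F.1) ∧
    ∀ C' ⊂ C, LinearIndependent 𝔽 (fun F : C' => bvec 𝔽 n k F.1)

/-- The rank (in `Sim_k^n`) of a set `X` of `k`-subsets of `[n]`:
the dimension of the span of the boundaries of its members. -/
noncomputable def simRank (𝔽 : Type*) [Field 𝔽] (n k : ℕ) (X : Finset (Finset (Fin n))) : ℕ :=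
  Module.finrank 𝔽 (Submodule.span 𝔽 ((fun F => bvec 𝔽 n k F) '' (X : Set (Finset (Fin n)))))

/-- A cocircuit of `Sim_k^n(S_k)`, i.e. a circuit of the dual matroid:
a minimal set `C ⊆ S_k` whose complement does not span (`X` is independent in the dual
matroid iff `r(E ∖ X) = r(E)`). -/
def SimCocircuit (𝔽 : Type*) [Field 𝔽] (n k : ℕ) (Sk C : Finset (Finset (Fin n))) : Prop :=
  C ⊆ Sk ∧ simRank 𝔽 n k (Sk \ C) < simRank 𝔽 n k Sk ∧
    ∀ C' ⊂ C, simRank 𝔽 n k (Sk \ C') = simRank 𝔽 n k Sk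

/-- The boundary map `∂_k : 𝔽^{S_k} → 𝔽^{C([n],k-1)}`. -/
noncomputable def bdryMap (𝔽 : Type*) [Field 𝔽] (n k : ℕ) (Sk : Finset (Finset (Fin n))) :
    (↥Sk → 𝔽) →ₗ[𝔽] (Csets n (k - 1) → 𝔽) :=
  Matrix.mulVecLin (Matrix.of fun (F' : Csets n (k - 1)) (F : ↥Sk) => ((inc F'.1 F.1 : ℤ) : 𝔽))

/-- The coboundary `δ^{k-1} V` of a `(k-1)`-subset `V` of `[n]`,
as a vector of `𝔽^{S_k}`; its `F`-coordinate is `[V : F]`. -/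
def cobdry (𝔽 : Type*) [Field 𝔽] {n : ℕ} (Sk : Finset (Finset (Fin n)))
    (V : Finset (Fin n)) : ↥Sk → 𝔽 :=
  fun F => ((inc V F.1 : ℤ) : 𝔽)

/-- The boundary `∂_{k+1} X` of a `(k+1)`-subset `X` of `[n]`, regarded as a vector
of `𝔽^{S_k}`; its `F`-coordinate is `[F : X]`. -/
def pbdry (𝔽 : Type*) [Field 𝔽] {n : ℕ} (Sk : Finset (Finset (Fin n)))
    (X : Finset (Fin n)) : ↥Sk → 𝔽 :=
  fun F => ((inc F.1 X : ℤ) : 𝔽)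

open scoped Classical in
/-- The support of a vector of `𝔽^{S_k}`, as a set of `k`-subsets of `[n]`. -/
noncomputable def suppFin {𝔽 : Type*} [Field 𝔽] {n : ℕ} {Sk : Finset (Finset (Fin n))}
    (v : ↥Sk → 𝔽) : Finset (Finset (Fin n)) :=
  (Sk.attach.filter fun F => v F ≠ 0).image Subtype.val

/-- `supp(δ^{k-1} V) ⊆ S_k`. -/
noncomputable def suppδ (𝔽 : Type*) [Field 𝔽] {n : ℕ} (Sk : Finset (Finset (Fin n)))
    (V : Finset (Fin n)) : Finset (Finset (Fin n)) :=
  suppFin (cobdry 𝔽 Sk V)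

/-- The cocircuit space of `Sim_k^n(S_k)`: the orthogonal complement, with respect to the
standard bilinear form on `𝔽^{S_k}`, of the circuit space `ker ∂_k`. -/
noncomputable def cocircSpace (𝔽 : Type*) [Field 𝔽] (n k : ℕ) (Sk : Finset (Finset (Fin n))) :
    Submodule 𝔽 (↥Sk → 𝔽) where
  carrier := {w | ∀ v ∈ LinearMap.ker (bdryMap 𝔽 n k Sk), ∑ F, v F * w F = 0}
  zero_mem' := by intro v hv; simp
  add_mem' := by
    intro a b ha hb v hv
    have h1 := ha v hv
    have h2 := hb v hv
    simp only [Pi.add_apply, mul_add, Finset.sum_add_distrib]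
    rw [h1, h2, add_zero]
  smul_mem' := by
    intro c w hw v hv
    have h := hw v hv
    simp only [Pi.smul_apply, smul_eq_mul]
    calc ∑ F, v F * (c * w F) = ∑ F, c * (v F * w F) := by
          exact Finset.sum_congr rfl fun F _ => by ring
      _ = c * ∑ F, v F * w F := (Finset.mul_sum _ _ _).symm
      _ = 0 := by rw [h, mul_zero]

/-- The faces of the `k`-hyperclique complex `⟨S_k⟩`: all `F ⊆ [n]` with `|F| < k`,
together with all `F` every `k`-element subset of which lies in `S_k`. -/
def IsFace {n : ℕ} (k : ℕ) (Sk : Finset (Finset (Fin n))) (F : Finset (Fin n)) : Prop :=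
  F.card < k ∨ ∀ G ⊆ F, G.card = k → G ∈ Sk

/-- A facet of `⟨S_k⟩`: an inclusion-maximal face. -/
def IsFacet {n : ℕ} (k : ℕ) (Sk : Finset (Finset (Fin n))) (F : Finset (Fin n)) : Prop :=
  IsFace k Sk F ∧ ∀ G, IsFace k Sk G → F ⊆ G → F = G

/-- `V` is simplicial in `⟨S_k⟩` if there is exactly one facet `X` of `⟨S_k⟩`
with `V ⊊ X`. -/
def SimplicialFace {n : ℕ} (k : ℕ) (Sk : Finset (Finset (Fin n))) (V : Finset (Fin n)) : Prop :=
  ∃! X, IsFacet k Sk X ∧ V ⊂ X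

/-- The `k`-skeleta of the complexes `Δ_0 = ⟨S_k⟩`, `Δ_{j+1} = Δ_j ∖∖ V_j`, where
`Δ ∖∖ V = ⟨(skeleton of Δ) ∖ supp(δ^{k-1} V)⟩` (0-indexed). -/
noncomputable def delSeq (𝔽 : Type*) [Field 𝔽] {n : ℕ} (Sk : Finset (Finset (Fin n)))
    (V : ℕ → Finset (Fin n)) : ℕ → Finset (Finset (Fin n))
  | 0 => Sk
  | j + 1 => delSeq 𝔽 Sk V j \ suppδ 𝔽 (delSeq 𝔽 Sk V j) (V j)

/-- `C*_j := supp(δ^{k-1} V_j) ∖ ⋃_{i<j} supp(δ^{k-1} V_i)` (0-indexed). -/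
noncomputable def Cstar (𝔽 : Type*) [Field 𝔽] {n : ℕ} (Sk : Finset (Finset (Fin n)))
    (V : ℕ → Finset (Fin n)) (j : ℕ) : Finset (Finset (Fin n)) :=
  suppδ 𝔽 Sk (V j) \ (Finset.range j).biUnion (fun i => suppδ 𝔽 Sk (V i))

/-- `(V_1,…,V_r)` (0-indexed: `V 0, …, V (r-1)`) is a basic linear sequence for `⟨S_k⟩`,
where `r` is the rank of `Sim_k^n(S_k)`: each `V_j` is a `(k-1)`-subset of `[n]` and each
`C*_j` is a cocircuit of `Sim_k^n(S_k(Δ_{j-1}))`. -/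
def BasicLinearSeq (𝔽 : Type*) [Field 𝔽] (n k : ℕ) (Sk : Finset (Finset (Fin n))) (r : ℕ)
    (V : ℕ → Finset (Fin n)) : Prop :=
  simRank 𝔽 n k Sk = r ∧ (∀ j < r, (V j).card = k - 1) ∧
    ∀ j < r, SimCocircuit 𝔽 n k (delSeq 𝔽 Sk V j) (Cstar 𝔽 Sk V j)

/-- `⟨S_k⟩` is D-perfect: there is a basic linear sequence `V_1,…,V_r` such that each `V_j`
is simplicial in `Δ_{j-1}`. -/
def DPerfect (𝔽 : Type*) [Field 𝔽] (n k : ℕ) (Sk : Finset (Finset (Fin n))) : Prop :=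
  ∃ V : ℕ → Finset (Fin n),
    BasicLinearSeq 𝔽 n k Sk (simRank 𝔽 n k Sk) V ∧
      ∀ j < simRank 𝔽 n k Sk, SimplicialFace k (delSeq 𝔽 Sk V j) (V j)

/-- A flat of `Sim_k^n(S_k)`: a closed subset of the ground set. -/
def SimFlat (𝔽 : Type*) [Field 𝔽] (n k : ℕ) (Sk X : Finset (Finset (Fin n))) : Prop :=
  X ⊆ Sk ∧ ∀ F ∈ Sk,
    bvec 𝔽 n k F ∈ Submodule.span 𝔽 ((fun G => bvec 𝔽 n k G) '' (X : Set (Finset (Fin n)))) →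
      F ∈ X

/-- A hyperplane of `Sim_k^n(S_k)`: a flat of rank one less than the rank of the matroid. -/
def SimHyperplane (𝔽 : Type*) [Field 𝔽] (n k : ℕ) (Sk H : Finset (Finset (Fin n))) : Prop :=
  SimFlat 𝔽 n k Sk H ∧ simRank 𝔽 n k H + 1 = simRank 𝔽 n k Sk

/-- A modular flat of `Sim_k^n(S_k)`:
`r(X) + r(Y) = r(X ∪ Y) + r(X ∩ Y)` for every flat `Y`. -/
def ModularFlat (𝔽 : Type*) [Field 𝔽] (n k : ℕ) (Sk X : Finset (Finset (Fin n))) : Prop :=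
  SimFlat 𝔽 n k Sk X ∧ ∀ Y, SimFlat 𝔽 n k Sk Y →
    simRank 𝔽 n k X + simRank 𝔽 n k Y = simRank 𝔽 n k (X ∪ Y) + simRank 𝔽 n k (X ∩ Y)

open scoped Classical in
/-- The closure of `X` in `Sim_k^n(S_k)`. -/
noncomputable def simClosure (𝔽 : Type*) [Field 𝔽] (n k : ℕ)
    (Sk X : Finset (Finset (Fin n))) : Finset (Finset (Fin n)) :=
  Sk.filter fun F =>
    bvec 𝔽 n k F ∈ Submodule.span 𝔽 ((fun G => bvec 𝔽 n k G) '' (X : Set (Finset (Fin n))))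

/-- `Sim_k^n(S_k)` is supersolvable: it admits a maximal chain of modular flats
`cl(∅) = X_0 ⊊ X_1 ⊊ ⋯ ⊊ X_r = S_k`, `r` the rank. -/
def Supersolvable (𝔽 : Type*) [Field 𝔽] (n k : ℕ) (Sk : Finset (Finset (Fin n))) : Prop :=
  ∃ X : ℕ → Finset (Finset (Fin n)),
    X 0 = simClosure 𝔽 n k Sk ∅ ∧ X (simRank 𝔽 n k Sk) = Sk ∧
      (∀ i < simRank 𝔽 n k Sk, X i ⊂ X (i + 1)) ∧
      ∀ i ≤ simRank 𝔽 n k Sk, ModularFlat 𝔽 n k Sk (X i)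

/-- `H` is a dense hyperplane of `Sim_k^n(ground)`: a hyperplane of the form
`ground ∖ supp(δ^{k-1} V)` for some `(k-1)`-subset `V` simplicial in `⟨ground⟩`. -/
def DenseHyp (𝔽 : Type*) [Field 𝔽] (n k : ℕ) (ground H : Finset (Finset (Fin n))) : Prop :=
  SimHyperplane 𝔽 n k ground H ∧
    ∃ V : Finset (Fin n), V.card = k - 1 ∧ SimplicialFace k ground V ∧
      H = ground \ suppδ 𝔽 ground V

/-- `Sim_k^n(S_k)` is superdense: there is a chain `∅ = X_0 ⊊ X_1 ⊊ ⋯ ⊊ X_r = S_k` of flats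
(`r` the rank) with each `X_i` a dense hyperplane of `Sim_k^n(X_{i+1})`. -/
def Superdense (𝔽 : Type*) [Field 𝔽] (n k : ℕ) (Sk : Finset (Finset (Fin n))) : Prop :=
  ∃ X : ℕ → Finset (Finset (Fin n)),
    X 0 = ∅ ∧ X (simRank 𝔽 n k Sk) = Sk ∧
      (∀ i ≤ simRank 𝔽 n k Sk, SimFlat 𝔽 n k Sk (X i)) ∧
      (∀ i < simRank 𝔽 n k Sk, X i ⊂ X (i + 1)) ∧
      ∀ i < simRank 𝔽 n k Sk, DenseHyp 𝔽 n k (X (i + 1)) (X i)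

/-- `Sim_k^n(S_k)` is triangulable over `𝔽`: the boundaries of the `(k+1)`-faces of `⟨S_k⟩`
span the circuit space `ker ∂_k`. -/
def Triangulable (𝔽 : Type*) [Field 𝔽] (n k : ℕ) (Sk : Finset (Finset (Fin n))) : Prop :=
  Submodule.span 𝔽
      {v : ↥Sk → 𝔽 | ∃ X : Finset (Fin n), X.card = k + 1 ∧ IsFace k Sk X ∧ v = pbdry 𝔽 Sk X}
    = LinearMap.ker (bdryMap 𝔽 n k Sk)

/-- `Sim_k^n(S_k)` is strongly triangulable over `𝔽`: there are `(k+1)`-faces `X_1,…,X_{m'}`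
of `⟨S_k⟩` whose boundaries span `ker ∂_k` and such that every circuit `C` has a
representing vector `C⃗` with support `C` which is a combination, with nonzero coefficients,
of boundaries `∂_{k+1} X_{i_j}` with `⋃_{F ∈ C} F = ⋃_j X_{i_j}`. -/
def StronglyTriangulable (𝔽 : Type*) [Field 𝔽] (n k : ℕ)
    (Sk : Finset (Finset (Fin n))) : Prop :=
  ∃ (m' : ℕ) (Xs : Fin m' → Finset (Fin n)),
    (∀ i, (Xs i).card = k + 1 ∧ IsFace k Sk (Xs i)) ∧
    Submodule.span 𝔽 (Set.range fun i => pbdry 𝔽 Sk (Xs i)) = LinearMap.ker (bdryMap 𝔽 n k Sk) ∧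
    ∀ C, SimCircuit 𝔽 n k Sk C →
      ∃ (s : ℕ) (idx : Fin s → Fin m') (a : Fin s → 𝔽) (Cv : ↥Sk → 𝔽),
        (∀ j, a j ≠ 0) ∧ suppFin Cv = C ∧
        Cv = ∑ j, a j • pbdry 𝔽 Sk (Xs (idx j)) ∧
        C.biUnion id = Finset.univ.biUnion fun j : Fin s => Xs (idx j)

/-- The simple graph `([n], S_2)`. -/
def graphOf {n : ℕ} (S2 : Finset (Finset (Fin n))) : SimpleGraph (Fin n) where
  Adj u v := u ≠ v ∧ ({u, v} : Finset (Fin n)) ∈ S2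
  symm := by
    constructor
    intro u v h
    exact ⟨h.1.symm, by rw [Finset.pair_comm]; exact h.2⟩
  loopless := by constructor; intro u h; exact h.1 rfl

/-- A simple graph is chordal if every cycle of length at least four has a chord, i.e. an
edge of the graph joining two non-consecutive vertices of the cycle. -/
def Chordal {α : Type*} (G : SimpleGraph α) : Prop :=
  ∀ (v : α) (w : G.Walk v v), w.IsCycle → 4 ≤ w.length →
    ∃ u₁ u₂, u₁ ∈ w.support ∧ u₂ ∈ w.support ∧ G.Adj u₁ u₂ ∧ s(u₁, u₂) ∉ w.edges

/-!
The members of `supp(δV)` are the sets `insert a V` of `S_k`, and as `V` is simplicial they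
all lie in the unique facet `X ⊋ V`. The coordinate of `∂` at `V` vanishes on `S_k ∖ supp(δV)`
but not on `supp(δV)`, so deleting `supp(δV)` lowers the rank. If `insert b V` is kept, then for
any other `a ∈ X ∖ V` the relation `∂∂(insert a (insert b V)) = 0` expresses `∂(insert a V)`
through `∂(insert b V)` and boundaries of `k`-sets not containing `V`; hence deleting a proper
subset of `supp(δV)` keeps the rank.
-/

section Incidence

variable {n : ℕ}

lemma inc_erase {F : Finset (Fin n)} {i : Fin n} (hi : i ∈ F) :
    inc (F.erase i) F = (-1) ^ #(F.filter fun j => j ≤ i) := by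
  rw [inc, sum_eq_single i (fun j _ hji => if_neg fun h => ?_) (absurd hi), if_pos rfl]
  exact notMem_erase j F (h ▸ mem_erase.2 ⟨hji, ‹j ∈ F›⟩)

lemma inc_erase_cast_ne_zero (𝔽 : Type*) [Field 𝔽] {F : Finset (Fin n)} {i : Fin n}
    (hi : i ∈ F) : ((inc (F.erase i) F : ℤ) : 𝔽) ≠ 0 := by
  rw [inc_erase hi]
  push_cast
  exact pow_ne_zero _ (neg_ne_zero.2 one_ne_zero)

lemma inc_eq_sum_ite (W F : Finset (Fin n)) :
    inc W F = ∑ j ∈ F, if W = F.erase j then inc (F.erase j) F else 0 :=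
  sum_congr rfl fun j hj => by rw [inc_erase hj]

lemma inc_eq_zero_of_not_subset {W F : Finset (Fin n)} (h : ¬ W ⊆ F) : inc W F = 0 :=
  sum_eq_zero fun i _ => if_neg fun hW : W = F.erase i => h (hW ▸ erase_subset i F)

lemma inc_cast_ne_zero_of_subset (𝔽 : Type*) [Field 𝔽] {V F : Finset (Fin n)} (hVF : V ⊆ F)
    (hcard : #V + 1 = #F) : ((inc V F : ℤ) : 𝔽) ≠ 0 := by
  obtain ⟨a, ha, rfl⟩ := exists_eq_insert_iff.2 ⟨hVF, hcard⟩
  have h := inc_erase_cast_ne_zero 𝔽 (mem_insert_self a V)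
  rwa [erase_insert ha] at h

lemma inc_erase_mul_inc_erase_erase_of_lt {Y : Finset (Fin n)} {i j : Fin n} (hi : i ∈ Y)
    (hj : j ∈ Y) (hij : i < j) :
    inc (Y.erase i) Y * inc ((Y.erase i).erase j) (Y.erase i) =
      -(inc (Y.erase j) Y * inc ((Y.erase j).erase i) (Y.erase j)) := by
  rw [inc_erase hi, inc_erase hj, inc_erase (mem_erase.2 ⟨hij.ne', hj⟩),
    inc_erase (mem_erase.2 ⟨hij.ne, hi⟩), filter_erase, filter_erase,
    card_erase_of_mem (mem_filter.2 ⟨hi, hij.le⟩),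
    erase_eq_of_notMem fun h => (mem_filter.1 h).2.not_gt hij]
  obtain ⟨m, hm⟩ : ∃ m, #(Y.filter fun l => l ≤ j) = m + 1 :=
    Nat.exists_eq_add_one.2 (card_pos.2 ⟨j, mem_filter.2 ⟨hj, le_rfl⟩⟩)
  rw [hm, Nat.add_sub_cancel, pow_succ]
  ring

lemma inc_erase_mul_inc_erase_erase {Y : Finset (Fin n)} {i j : Fin n} (hi : i ∈ Y)
    (hj : j ∈ Y) (hij : i ≠ j) :
    inc (Y.erase i) Y * inc ((Y.erase i).erase j) (Y.erase i) =
      -(inc (Y.erase j) Y * inc ((Y.erase j).erase i) (Y.erase j)) := by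
  rcases hij.lt_or_gt with h | h
  · exact inc_erase_mul_inc_erase_erase_of_lt hi hj h
  · exact neg_eq_iff_eq_neg.1 (inc_erase_mul_inc_erase_erase_of_lt hj hi h).symm

/-- `∂ ∘ ∂ = 0`, read off at the coordinate `W`. -/
lemma sum_inc_erase_mul_inc (Y W : Finset (Fin n)) :
    ∑ i ∈ Y, inc (Y.erase i) Y * inc W (Y.erase i) = 0 := by
  simp_rw [inc_eq_sum_ite W, mul_sum, mul_ite, mul_zero]
  rw [sum_sigma']
  refine sum_involution (fun p _ => ⟨p.2, p.1⟩) ?_ ?_ ?_ fun _ _ => rfl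
  · rintro ⟨i, j⟩ hp
    obtain ⟨hi, hj⟩ : i ∈ Y ∧ j ∈ Y.erase i := mem_sigma.1 hp
    by_cases hW : W = (Y.erase i).erase j
    · rw [if_pos hW, if_pos (hW.trans (erase_right_comm ..)),
        inc_erase_mul_inc_erase_erase hi (mem_of_mem_erase hj)
          (ne_of_mem_erase hj).symm, neg_add_cancel]
    · rw [if_neg hW, if_neg fun h => hW (h.trans (erase_right_comm ..)), add_zero]
  · rintro ⟨i, j⟩ hp _ h
    exact ne_of_mem_erase (mem_sigma.1 hp).2 (congrArg Sigma.fst h)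
  · rintro ⟨i, j⟩ hp
    obtain ⟨hi, hj⟩ := mem_sigma.1 hp
    exact mem_sigma.2 ⟨mem_of_mem_erase hj,
      mem_erase.2 ⟨(ne_of_mem_erase hj).symm, hi⟩⟩

end Incidence

section Span

variable (𝔽 : Type*) [Field 𝔽] {n : ℕ} (k : ℕ)

noncomputable def simSpan (X : Finset (Finset (Fin n))) : Submodule 𝔽 (Csets n (k - 1) → 𝔽) :=
  Submodule.span 𝔽 (bvec 𝔽 n k '' X)

lemma simRank_eq_finrank_simSpan (X : Finset (Finset (Fin n))) :
    simRank 𝔽 n k X = Module.finrank 𝔽 (simSpan 𝔽 k X) :=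
  rfl

lemma sum_inc_erase_smul_bvec_erase (Y : Finset (Fin n)) :
    ∑ i ∈ Y, ((inc (Y.erase i) Y : ℤ) : 𝔽) • bvec 𝔽 n k (Y.erase i) = 0 := by
  funext W
  simpa [bvec] using congrArg (Int.cast : ℤ → 𝔽) (sum_inc_erase_mul_inc Y W.1)

lemma bvec_erase_mem_span {Y : Finset (Fin n)} {i₀ : Fin n} (hi₀ : i₀ ∈ Y) :
    bvec 𝔽 n k (Y.erase i₀) ∈
      Submodule.span 𝔽 ((fun i => bvec 𝔽 n k (Y.erase i)) '' ↑(Y.erase i₀)) := by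
  have hsum := sum_inc_erase_smul_bvec_erase 𝔽 k Y
  rw [← add_sum_erase _ _ hi₀] at hsum
  refine (Submodule.smul_mem_iff _ (inc_erase_cast_ne_zero 𝔽 hi₀)).1 ?_
  rw [eq_neg_of_add_eq_zero_left hsum]
  exact Submodule.neg_mem _ (Submodule.sum_mem _ fun i hi =>
    Submodule.smul_mem _ _ (Submodule.subset_span (Set.mem_image_of_mem _ hi)))

lemma bvec_insert_mem_simSpan {Sk : Finset (Finset (Fin n))} {V : Finset (Fin n)} {a b : Fin n}
    (ha : a ∉ V) (hb : b ∉ V) (hab : a ≠ b)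
    (hface : ∀ G ⊆ insert a (insert b V), #G = #V + 1 → G ∈ Sk) :
    bvec 𝔽 n k (insert a V) ∈ simSpan 𝔽 k (Sk.filter fun G => G = insert b V ∨ ¬ V ⊆ G) := by
  have hYb : (insert a (insert b V)).erase b = insert a V := by
    rw [erase_insert_of_ne hab, erase_insert hb]
  rw [← hYb]
  set Y := insert a (insert b V)
  have hbY : b ∈ Y := mem_insert_of_mem (mem_insert_self b V)
  refine Submodule.span_le.2 ?_ (bvec_erase_mem_span 𝔽 k hbY)
  rintro _ ⟨i, hi, rfl⟩
  have hiY := mem_of_mem_erase hi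
  have hYc : #Y = #V + 2 := by
    rw [card_insert_of_notMem (by simp [hab, ha]), card_insert_of_notMem hb]
  refine Submodule.subset_span ⟨Y.erase i, mem_filter.2 ⟨hface _ (erase_subset i Y)
    (by rw [card_erase_of_mem hiY, hYc]; omega), ?_⟩, rfl⟩
  rcases mem_insert.1 hiY with rfl | hi'
  · exact Or.inl (erase_insert (by simp [hab, ha]))
  · rcases mem_insert.1 hi' with rfl | hiV
    · exact absurd rfl (ne_of_mem_erase hi)
    · exact Or.inr fun hV => notMem_erase i Y (hV hiV)

lemma simRank_sdiff_eq_of_forall_mem_simSpan {Sk C : Finset (Finset (Fin n))}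
    (h : ∀ F ∈ C, bvec 𝔽 n k F ∈ simSpan 𝔽 k (Sk \ C)) :
    simRank 𝔽 n k (Sk \ C) = simRank 𝔽 n k Sk := by
  suffices simSpan 𝔽 k (Sk \ C) = simSpan 𝔽 k Sk by
    rw [simRank_eq_finrank_simSpan, simRank_eq_finrank_simSpan, this]
  refine le_antisymm (Submodule.span_mono (Set.image_mono (by simp))) (Submodule.span_le.2 ?_)
  rintro _ ⟨F, hF, rfl⟩
  by_cases hFC : F ∈ C
  · exact h F hFC
  · exact Submodule.subset_span ⟨F, by simpa [hFC] using hF, rfl⟩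

lemma mem_suppδ {Sk : Finset (Finset (Fin n))} {V F : Finset (Fin n)} :
    F ∈ suppδ 𝔽 Sk V ↔ F ∈ Sk ∧ ((inc V F : ℤ) : 𝔽) ≠ 0 := by
  classical
  simp only [suppδ, suppFin, cobdry, mem_image]
  constructor
  · rintro ⟨⟨G, hG⟩, hne, rfl⟩
    exact ⟨hG, (mem_filter.1 hne).2⟩
  · rintro ⟨hF, hne⟩
    exact ⟨⟨F, hF⟩, mem_filter.2 ⟨mem_attach _ _, hne⟩, rfl⟩

lemma mem_suppδ_iff_subset {Sk : Finset (Finset (Fin n))} {V : Finset (Fin n)}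
    (hcard : ∀ F ∈ Sk, #V + 1 = #F) (F : Finset (Fin n)) :
    F ∈ suppδ 𝔽 Sk V ↔ F ∈ Sk ∧ V ⊆ F := by
  refine (mem_suppδ 𝔽).trans (and_congr_right fun hF => ⟨fun h => ?_, fun h =>
    inc_cast_ne_zero_of_subset 𝔽 h (hcard F hF)⟩)
  by_contra hVF
  exact h (by rw [inc_eq_zero_of_not_subset hVF, Int.cast_zero])

lemma simRank_sdiff_suppδ_lt {Sk : Finset (Finset (Fin n))} {V F : Finset (Fin n)}
    (hV : #V = k - 1) (hF : F ∈ suppδ 𝔽 Sk V) :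
    simRank 𝔽 n k (Sk \ suppδ 𝔽 Sk V) < simRank 𝔽 n k Sk := by
  let φ := LinearMap.proj (R := 𝔽) (φ := fun _ : Csets n (k - 1) => 𝔽) ⟨V, hV⟩
  have hle : simSpan 𝔽 k (Sk \ suppδ 𝔽 Sk V) ≤ LinearMap.ker φ := by
    refine Submodule.span_le.2 ?_
    rintro _ ⟨G, hG, rfl⟩
    obtain ⟨hGSk, hGV⟩ := mem_sdiff.1 hG
    by_contra hne
    exact hGV ((mem_suppδ 𝔽).2 ⟨hGSk, hne⟩)
  refine Submodule.finrank_lt_finrank_of_lt (lt_of_le_of_ne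
    (Submodule.span_mono (Set.image_mono (by simp))) fun heq => ?_)
  obtain ⟨hFSk, hFV⟩ := (mem_suppδ 𝔽).1 hF
  have hmem : bvec 𝔽 n k F ∈ LinearMap.ker φ := by
    refine hle ?_
    rw [simSpan, heq]
    exact Submodule.subset_span ⟨F, hFSk, rfl⟩
  exact hFV hmem

end Span

section Facets

variable {n k : ℕ} {Sk : Finset (Finset (Fin n))}

lemma isFace_of_mem {F : Finset (Fin n)} (hF : F ∈ Sk) (hcard : #F = k) : IsFace k Sk F :=
  Or.inr fun G hG hGc => by rwa [eq_of_subset_of_card_le hG (by rw [hcard, hGc])]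

lemma IsFace.mem_of_subset {F G : Finset (Fin n)} (hF : IsFace k Sk F) (hkF : k ≤ #F)
    (hG : G ⊆ F) (hGc : #G = k) : G ∈ Sk :=
  hF.resolve_left hkF.not_gt G hG hGc

lemma IsFace.exists_isFacet_superset {F : Finset (Fin n)} (hF : IsFace k Sk F) :
    ∃ G, IsFacet k Sk G ∧ F ⊆ G := by
  classical
  obtain ⟨G, hG, hmax⟩ := exists_max_image
    (univ.filter fun G => IsFace k Sk G ∧ F ⊆ G) Finset.card ⟨F, by simp [hF]⟩
  simp only [mem_filter, mem_univ, true_and] at hG hmax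
  exact ⟨G, ⟨hG.1, fun G' hG' hGG' => eq_of_subset_of_card_le hGG'
    (hmax G' ⟨hG', hG.2.trans hGG'⟩)⟩, hG.2⟩

lemma subset_of_isFacet_unique {V X G : Finset (Fin n)}
    (hX : ∀ Y, IsFacet k Sk Y ∧ V ⊂ Y → Y = X) (hG : IsFace k Sk G) (hVG : V ⊂ G) : G ⊆ X := by
  obtain ⟨Y, hY, hGY⟩ := hG.exists_isFacet_superset
  exact hX Y ⟨hY, hVG.trans_subset hGY⟩ ▸ hGY

end Facets

lemma bvec_mem_simSpan_sdiff_of_simplicialFace (𝔽 : Type*) [Field 𝔽] {n k : ℕ}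
    {Sk : Finset (Finset (Fin n))} (hSk : ∀ F ∈ Sk, #F = k) {V : Finset (Fin n)}
    (hVk : #V + 1 = k) (hsimp : SimplicialFace k Sk V) {C : Finset (Finset (Fin n))}
    (hC : C ⊂ suppδ 𝔽 Sk V) {F : Finset (Fin n)} (hF : F ∈ C) :
    bvec 𝔽 n k F ∈ simSpan 𝔽 k (Sk \ C) := by
  obtain ⟨X, ⟨hXfacet, hVX⟩, hXuniq⟩ := hsimp
  have hD := mem_suppδ_iff_subset 𝔽 (V := V) fun G hG => by rw [hSk G hG, hVk]
  have hDX : ∀ G ∈ suppδ 𝔽 Sk V, ∃ a ∈ X, a ∉ V ∧ insert a V = G := by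
    intro G hG
    obtain ⟨hGSk, hVG⟩ := (hD G).1 hG
    obtain ⟨a, ha, rfl⟩ := exists_eq_insert_iff.2 ⟨hVG, by rw [hSk _ hGSk, hVk]⟩
    have hGX := subset_of_isFacet_unique hXuniq (isFace_of_mem hGSk (hSk _ hGSk))
      (ssubset_insert ha)
    exact ⟨a, hGX (mem_insert_self a V), ha, rfl⟩
  obtain ⟨F₀, hF₀D, hF₀C⟩ := exists_of_ssubset hC
  obtain ⟨a, haX, ha, rfl⟩ := hDX F (hC.subset hF)
  obtain ⟨b, hbX, hb, rfl⟩ := hDX F₀ hF₀D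
  have hab : a ≠ b := by rintro rfl; exact hF₀C hF
  have hkX : k ≤ #X := by have := card_lt_card hVX; omega
  refine Submodule.span_mono (Set.image_mono ?_) (bvec_insert_mem_simSpan 𝔽 k ha hb hab
    fun G hG hGc => hXfacet.1.mem_of_subset hkX (hG.trans ?_) (hVk ▸ hGc))
  · intro G hG
    obtain ⟨hGSk, rfl | hVG⟩ := mem_filter.1 hG
    · exact mem_sdiff.2 ⟨hGSk, hF₀C⟩
    · exact mem_sdiff.2 ⟨hGSk, fun hGC => hVG ((hD G).1 (hC.subset hGC)).2⟩
  · exact insert_subset haX (insert_subset hbX hVX.subset)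

theorem stmt6_general (𝔽 : Type*) [Field 𝔽] (n k : ℕ) (hk : 2 ≤ k)
    (Sk : Finset (Finset (Fin n))) (hSk : ∀ F ∈ Sk, F.card = k)
    (V : Finset (Fin n)) (hV : V.card = k - 1) (hsimp : SimplicialFace k Sk V) :
    SimCocircuit 𝔽 n k Sk (suppδ 𝔽 Sk V) := by
  have hVk : #V + 1 = k := by omega
  have hD := mem_suppδ_iff_subset 𝔽 (V := V) fun G hG => by rw [hSk G hG, hVk]
  obtain ⟨X, hXfacet, hVX⟩ := hsimp.exists
  have hkX : k ≤ #X := by have := card_lt_card hVX; omega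
  obtain ⟨F, hVF, hFX, hFc⟩ := exists_subsuperset_card_eq hVX.subset (by omega) hkX
  refine ⟨fun G hG => ((hD G).1 hG).1,
    simRank_sdiff_suppδ_lt 𝔽 k hV ((hD F).2 ⟨hXfacet.1.mem_of_subset hkX hFX hFc, hVF⟩),
    fun C hC => simRank_sdiff_eq_of_forall_mem_simSpan 𝔽 k fun G hG =>
      bvec_mem_simSpan_sdiff_of_simplicialFace 𝔽 hSk hVk hsimp hC hG⟩

theorem stmt6 (𝔽 : Type*) [Field 𝔽] (n k : ℕ) (hk : 2 ≤ k) (hkn : k ≤ n)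
    (Sk : Finset (Finset (Fin n))) (hSk : ∀ F ∈ Sk, F.card = k)
    (V : Finset (Fin n)) (hV : V.card = k - 1) (hsimp : SimplicialFace k Sk V) :
    SimCocircuit 𝔽 n k Sk (suppδ 𝔽 Sk V) :=
  stmt6_general 𝔽 n k hk Sk hSk V hV hsimp
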